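/- Let p be a prime and m a natural number. In the polynomial ring ℚ(q)[x, ξ] in two variables over ℚ(q), define for each k ∈ ℕ the level-m twisted divided power ξ^{{k}_{(m),q}} := (∏_{j=0}^{k−1}(ξ + (1−q^j)x)) / (⌊k/p^m⌋)_{q^{p^m}}!. Then for all k, k' ∈ ℕ the following multiplication rule holds: ξ^{{k}_{(m),q}} · ξ^{{k'}_{(m),q}} = Σ_{j=0}^{min(k,k')} [(j)_q! / (⌊j/p^m⌋)_{q^{p^m}}!] · q^{j(j−1)/2} · {k+k'−j choose k}_{(m),q} · (k choose j)_q · ⟨k' choose j⟩_{(m),q} · (q−1)^j · x^j · ξ^{{k+k'−j}_{(m),q}}. -/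

import Mathlib

set_option synthInstance.maxHeartbeats 1000000
set_option maxHeartbeats 2000000


noncomputable section

open Polynomial

/-- `ℤ[q]`, the polynomial ring in one variable `q` over `ℤ`. -/
abbrev Zq : Type := Polynomial ℤ

/-- `ℚ(q)`, realized as the fraction field of `ℤ[q]`. -/
abbrev Qq : Type := FractionRing Zq

/-- The canonical embedding `ℤ[q] → ℚ(q)`. -/
def ι : Zq →+* Qq := algebraMap Zq Qq

/-- The image of the variable `q` in `ℚ(q)`. -/
def qQ : Qq := ι X

/-- The `q^a`-integer `(n)_{q^a} = 1 + q^a + ⋯ + q^{a(n-1)}` in `ℤ[q]`. -/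
def qInt (a n : ℕ) : Zq := ∑ j ∈ Finset.range n, X ^ (a * j)

/-- The `q^a`-factorial `(n)_{q^a}! = ∏_{i=1}^{n} (i)_{q^a}` in `ℤ[q]`. -/
def qFact (a n : ℕ) : Zq := ∏ i ∈ Finset.range n, qInt a (i + 1)

/-- The prime ideal `(p, q - 1)` of `ℤ[q]`. -/
def pqIdeal (p : ℕ) : Ideal Zq := Ideal.span {C (p : ℤ), X - 1}

/-- Membership in the localization `ℤ[q]_{(p,q-1)}`, viewed inside `ℚ(q)`:
`x = a / b` with `b ∉ (p, q-1)`. -/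
def InLoc (p : ℕ) (x : Qq) : Prop :=
  ∃ a b : Zq, b ∉ pqIdeal p ∧ x * ι b = ι a

/-- Being a unit of the localization `ℤ[q]_{(p,q-1)}`, viewed inside `ℚ(q)`:
`x = a / b` with `a, b ∉ (p, q-1)`. -/
def IsLocUnit (p : ℕ) (x : Qq) : Prop :=
  ∃ a b : Zq, a ∉ pqIdeal p ∧ b ∉ pqIdeal p ∧ x * ι b = ι a

/-- The Gaussian `q`-binomial coefficient `(k choose k')_q` as an element of `ℚ(q)`. -/
def qBinomF (k k' : ℕ) : Qq :=
  ι (qFact 1 k) / (ι (qFact 1 k') * ι (qFact 1 (k - k')))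

/-- The level-`m` coefficient `{k choose k'}_{(m),q}` as an element of `ℚ(q)`. -/
def braceC (p m k k' : ℕ) : Qq :=
  ι (qFact (p ^ m) (k / p ^ m)) /
    (ι (qFact (p ^ m) (k' / p ^ m)) * ι (qFact (p ^ m) ((k - k') / p ^ m)))

/-- The level-`m` coefficient `⟨k choose k'⟩_{(m),q}` as an element of `ℚ(q)`. -/
def angleC (p m k k' : ℕ) : Qq := qBinomF k k' * (braceC p m k k')⁻¹

/-- The level-`m` twisted divided power `ξ^{{k}_{(m),q}}` in `ℚ(q)[x][ξ]`
(the outer variable is `ξ`, the inner one is `x`). -/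
def tdpoly (p m k : ℕ) : Polynomial (Polynomial Qq) :=
  (∏ j ∈ Finset.range k, (X + C (Polynomial.C (1 - qQ ^ j) * Polynomial.X))) *
    C (Polynomial.C (ι (qFact (p ^ m) (k / p ^ m)))⁻¹)


-- basics
lemma ι_inj : Function.Injective ι := IsFractionRing.injective Zq Qq

lemma qInt_ne_zero (a n : ℕ) (hn : n ≠ 0) : qInt a n ≠ 0 := by
  intro h
  have : (qInt a n).eval 1 = 0 := by rw [h]; simp
  rw [qInt] at this
  simp [Polynomial.eval_finset_sum] at this
  omega

lemma qFact_ne_zero (a n : ℕ) : qFact a n ≠ 0 := by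
  rw [qFact]
  exact Finset.prod_ne_zero_iff.2 fun i _ => qInt_ne_zero a (i+1) (by omega)

lemma ιqFact_ne_zero (a n : ℕ) : ι (qFact a n) ≠ 0 := by
  simpa using fun h => qFact_ne_zero a n (ι_inj (h.trans (map_zero ι).symm))

lemma ιqInt_ne_zero (a n : ℕ) (hn : n ≠ 0) : ι (qInt a n) ≠ 0 := by
  simpa using fun h => qInt_ne_zero a n hn (ι_inj (h.trans (map_zero ι).symm))

lemma qInt_add (a b : ℕ) : qInt 1 (a + b) = qInt 1 a + X ^ a * qInt 1 b := by
  rw [qInt, qInt, qInt, Finset.sum_range_add, Finset.mul_sum]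
  congr 1
  exact Finset.sum_congr rfl fun i _ => by rw [← pow_add]; ring_nf

lemma qInt_mul_sub (n : ℕ) : (X - 1) * qInt 1 n = X ^ n - 1 := by
  induction n with
  | zero => simp [qInt]
  | succ n ih =>
    have := qInt_add n 1
    rw [this, mul_add, ih]
    have : qInt 1 1 = 1 := by simp [qInt]
    rw [this]
    ring

lemma ιqInt_add (a b : ℕ) : ι (qInt 1 (a+b)) = ι (qInt 1 a) + qQ ^ a * ι (qInt 1 b) := by
  rw [qInt_add, map_add, map_mul, map_pow, qQ]

lemma ιqInt_mul_sub (n : ℕ) : (qQ - 1) * ι (qInt 1 n) = qQ ^ n - 1 := by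
  have := congrArg ι (qInt_mul_sub n)
  rw [map_mul, map_sub, map_sub, map_one, map_pow] at this
  exact this

lemma qFact_succ (a n : ℕ) : qFact a (n+1) = qFact a n * qInt a (n+1) :=
  Finset.prod_range_succ _ _

/-- falling q-factorial -/
def qA (n j : ℕ) : Zq := ∏ i ∈ Finset.range j, qInt 1 (n - i)

lemma qA_zero (n : ℕ) : qA n 0 = 1 := rfl

lemma qA_succ (n j : ℕ) : qA n (j+1) = qA n j * qInt 1 (n - j) := Finset.prod_range_succ _ _

lemma qA_succ_left (n j : ℕ) : qA (n+1) (j+1) = qA n j * qInt 1 (n+1) := by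
  rw [qA, Finset.prod_range_succ']
  simp [qA]

lemma qA_eq_zero (n j : ℕ) (h : n < j) : qA n j = 0 := by
  apply Finset.prod_eq_zero (Finset.mem_range.2 h)
  simp [qInt, Nat.sub_self]

lemma qA_mul_fact (n j : ℕ) (h : j ≤ n) : qA n j * qFact 1 (n - j) = qFact 1 n := by
  induction j with
  | zero => simp [qA_zero]
  | succ j ih =>
    have hj : j ≤ n := by omega
    have h1 : n - j = (n - (j+1)) + 1 := by omega
    rw [qA_succ, ← ih hj, h1, qFact_succ, ← h1]
    ring

/-- coefficient -/
def eC (k k' j : ℕ) : Qq :=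
  qQ ^ (j * (j-1) / 2) * ι (qA k j) * ι (qA k' j) * (ι (qFact 1 j))⁻¹ * (qQ - 1) ^ j

/-- the product ∏ (ξ + (1-q^j) x) -/
def F (k : ℕ) : Polynomial (Polynomial Qq) :=
  ∏ j ∈ Finset.range k, (X + C (Polynomial.C (1 - qQ ^ j) * Polynomial.X))

lemma F_zero : F 0 = 1 := rfl
lemma F_succ (n : ℕ) : F (n+1) = F n * (X + C (Polynomial.C (1 - qQ ^ n) * Polynomial.X)) :=
  Finset.prod_range_succ _ _

lemma tri (j : ℕ) : (j+1) * j / 2 = j * (j-1) / 2 + j := by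
  cases j with
  | zero => rfl
  | succ i =>
    have h : (i+1+1) * (i+1) = (i+1) * i + 2 * (i+1) := by ring
    rw [h, Nat.add_mul_div_left _ _ (by norm_num : 0 < 2)]
    simp

lemma key_e (k k' j : ℕ) (hj : j ≤ k') :
    eC k (k'+1) (j+1) = eC k k' (j+1) + eC k k' j * (qQ ^ (k + k' - j) - qQ ^ k') := by
  by_cases hk : j ≤ k
  · obtain ⟨u, rfl⟩ : ∃ u, k = j + u := ⟨k - j, by omega⟩
    obtain ⟨v, rfl⟩ : ∃ v, k' = j + v := ⟨k' - j, by omega⟩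
    have h1 : j + u + (j + v) - j = u + (j + v) := by omega
    have h2 : j + u - j = u := by omega
    have h3 : j + v - j = v := by omega
    rw [h1]
    unfold eC
    rw [Nat.add_sub_cancel, tri, qA_succ_left (j+v) j, qA_succ, qA_succ, h2, h3, qFact_succ,
      (by omega : j + v + 1 = v + (j + 1)), qInt_add]
    have hu := ιqInt_mul_sub u
    have hij := ιqFact_ne_zero 1 j
    have hij1 := ιqInt_ne_zero 1 (j+1) (by omega)
    push_cast [map_mul, map_add, map_pow, pow_add, pow_succ] at *
    field_simp
    rw [show ι Polynomial.X = qQ from rfl]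
    linear_combination (qQ^(j*(j-1)/2) * qQ^j * qQ^v * ι (qA (j+u) j) * ι (qA (j+v) j) *
      (qQ-1)^j * ι (qInt 1 (j+1))) * hu
  · have hzk : qA k (j+1) = 0 := qA_eq_zero _ _ (by omega)
    have hzk' : qA k j = 0 := qA_eq_zero _ _ (by omega)
    unfold eC
    rw [hzk, hzk']
    simp

lemma eC_zero (k n : ℕ) : eC k n 0 = 1 := by
  simp [eC, qA_zero, qFact]

lemma eC_top (k k' j : ℕ) (h : k' < j) : eC k k' j = 0 := by
  simp [eC, qA_eq_zero k' j h]

lemma star (k k' : ℕ) :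
    F k * F k' = ∑ j ∈ Finset.range (k' + 1),
      C (Polynomial.C (eC k k' j) * Polynomial.X ^ j) * F (k + k' - j) := by
  induction k' with
  | zero => simp [F_zero, eC_zero]
  | succ k' ih =>
    have hterm : ∀ j ∈ Finset.range (k' + 1),
        (C (Polynomial.C (eC k k' j) * Polynomial.X ^ j) * F (k + k' - j)) *
          (X + C (Polynomial.C (1 - qQ ^ k') * Polynomial.X)) =
        C (Polynomial.C (eC k k' j) * Polynomial.X ^ j) * F (k + k' + 1 - j) +
          C (Polynomial.C (eC k k' j * (qQ ^ (k + k' - j) - qQ ^ k')) *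
            Polynomial.X ^ (j + 1)) * F (k + k' - j) := by
      intro j hj
      rw [Finset.mem_range] at hj
      have hsplit : (X + C (Polynomial.C (1 - qQ ^ k') * Polynomial.X) :
          Polynomial (Polynomial Qq)) =
          (X + C (Polynomial.C (1 - qQ ^ (k + k' - j)) * Polynomial.X)) +
            C (Polynomial.C (qQ ^ (k + k' - j) - qQ ^ k') * Polynomial.X) := by
        rw [add_assoc, ← C_add, ← add_mul, ← C_add]
        congr 3
        ring
      rw [hsplit, mul_add]
      congr 1
      · rw [mul_assoc, ← F_succ]
        congr 2
        omega
      · simp only [pow_succ, map_mul]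
        ring
    rw [F_succ, ← mul_assoc, ih, Finset.sum_mul, Finset.sum_congr rfl hterm,
      Finset.sum_add_distrib]
    have hT : ∀ i ∈ Finset.range (k' + 1),
        C (Polynomial.C (eC k (k' + 1) (i + 1)) * Polynomial.X ^ (i + 1)) *
          F (k + (k' + 1) - (i + 1)) =
        C (Polynomial.C (eC k k' (i + 1)) * Polynomial.X ^ (i + 1)) *
          F (k + k' + 1 - (i + 1)) +
          C (Polynomial.C (eC k k' i * (qQ ^ (k + k' - i) - qQ ^ k')) *
            Polynomial.X ^ (i + 1)) * F (k + k' - i) := by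
      intro i hi
      rw [Finset.mem_range] at hi
      rw [key_e k k' i (by omega), show k + (k' + 1) - (i + 1) = k + k' - i by omega,
        show k + k' + 1 - (i + 1) = k + k' - i by omega]
      simp only [Polynomial.C_add, add_mul, map_add]
    have h0 : C (Polynomial.C (eC k (k' + 1) 0) * Polynomial.X ^ 0) * F (k + (k' + 1) - 0) =
        C (Polynomial.C (eC k k' 0) * Polynomial.X ^ 0) * F (k + k' + 1 - 0) := by
      rw [eC_zero, eC_zero]
      rfl
    rw [Finset.sum_range_succ' _ (k' + 1), Finset.sum_congr rfl hT, Finset.sum_add_distrib, h0,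
      add_right_comm (∑ i ∈ Finset.range (k' + 1),
        C (Polynomial.C (eC k k' (i + 1)) * Polynomial.X ^ (i + 1)) * F (k + k' + 1 - (i + 1)))
        (∑ i ∈ Finset.range (k' + 1),
        C (Polynomial.C (eC k k' i * (qQ ^ (k + k' - i) - qQ ^ k')) * Polynomial.X ^ (i + 1)) *
          F (k + k' - i))
        (C (Polynomial.C (eC k k' 0) * Polynomial.X ^ 0) * F (k + k' + 1 - 0)),
      ← Finset.sum_range_succ' (fun j =>
        C (Polynomial.C (eC k k' j) * Polynomial.X ^ j) * F (k + k' + 1 - j)) (k' + 1),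
      Finset.sum_range_succ (fun j =>
        C (Polynomial.C (eC k k' j) * Polynomial.X ^ j) * F (k + k' + 1 - j)) (k' + 1)]
    rw [eC_top k k' (k' + 1) (by omega)]
    simp

lemma eC_left_top (k k' j : ℕ) (h : k < j) : eC k k' j = 0 := by
  simp [eC, qA_eq_zero k j h]

lemma ιqA_div (n j : ℕ) (h : j ≤ n) :
    ι (qA n j) = ι (qFact 1 n) / ι (qFact 1 (n - j)) := by
  have := congrArg ι (qA_mul_fact n j h)
  rw [map_mul] at this
  field_simp [ιqFact_ne_zero]
  exact this


lemma scalar_eq (p m k k' j : ℕ) (hjk : j ≤ k) (hjk' : j ≤ k') :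
    eC k k' j * ((ι (qFact (p ^ m) (k / p ^ m)))⁻¹ * (ι (qFact (p ^ m) (k' / p ^ m)))⁻¹) =
    (ι (qFact 1 j) * (ι (qFact (p ^ m) (j / p ^ m)))⁻¹) * qQ ^ (j * (j - 1) / 2) *
      braceC p m (k + k' - j) k * qBinomF k j * angleC p m k' j * (qQ - 1) ^ j *
      (ι (qFact (p ^ m) ((k + k' - j) / p ^ m)))⁻¹ := by
  simp only [eC, braceC, qBinomF, angleC, inv_div]
  rw [ιqA_div k j hjk, ιqA_div k' j hjk', show k + k' - j - k = k' - j by omega]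
  have h1 := ιqFact_ne_zero 1 j
  have h2 := ιqFact_ne_zero 1 (k - j)
  have h3 := ιqFact_ne_zero 1 (k' - j)
  have h4 := ιqFact_ne_zero (p ^ m) (j / p ^ m)
  have h5 := ιqFact_ne_zero (p ^ m) (k / p ^ m)
  have h6 := ιqFact_ne_zero (p ^ m) (k' / p ^ m)
  have h7 := ιqFact_ne_zero (p ^ m) ((k' - j) / p ^ m)
  have h8 := ιqFact_ne_zero (p ^ m) ((k + k' - j) / p ^ m)
  field_simp

/-- Multiplication rule for the level-`m` twisted divided powers. -/
theorem stmt6 (p : ℕ) (hp : p.Prime) (m k k' : ℕ) :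
    tdpoly p m k * tdpoly p m k' =
      ∑ j ∈ Finset.range (min k k' + 1),
        C (Polynomial.C
            ((ι (qFact 1 j) * (ι (qFact (p ^ m) (j / p ^ m)))⁻¹) *
              qQ ^ (j * (j - 1) / 2) * braceC p m (k + k' - j) k * qBinomF k j *
              angleC p m k' j * (qQ - 1) ^ j) *
            Polynomial.X ^ j) *
          tdpoly p m (k + k' - j) := by
  have key : ∀ n : ℕ, tdpoly p m n =
      F n * C (Polynomial.C (ι (qFact (p ^ m) (n / p ^ m)))⁻¹) := fun n => rfl
  have hsub : Finset.range (min k k' + 1) ⊆ Finset.range (k' + 1) :=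
    Finset.range_subset_range.2 (by omega)
  have hvan : ∀ x ∈ Finset.range (k' + 1), x ∉ Finset.range (min k k' + 1) →
      C (Polynomial.C (eC k k' x) * Polynomial.X ^ x) * F (k + k' - x) *
        C (Polynomial.C ((ι (qFact (p ^ m) (k / p ^ m)))⁻¹ *
          (ι (qFact (p ^ m) (k' / p ^ m)))⁻¹)) = 0 := by
    intro x hx hx'
    rw [Finset.mem_range] at hx
    rw [Finset.mem_range] at hx'
    rw [eC_left_top k k' x (by omega)]
    simp
  rw [key k, key k', show ∀ a b c d : Polynomial (Polynomial Qq), a * b * (c * d) = a * c * (b * d) from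
      fun a b c d => by ring, star k k', Finset.sum_mul, ← map_mul,
    ← Polynomial.C_mul]
  rw [← Finset.sum_subset hsub hvan]
  refine Finset.sum_congr rfl fun j hj => ?_
  rw [Finset.mem_range] at hj
  have hjk : j ≤ k := by omega
  have hjk' : j ≤ k' := by omega
  rw [key (k + k' - j)]
  calc C (Polynomial.C (eC k k' j) * Polynomial.X ^ j) * F (k + k' - j) *
        C (Polynomial.C ((ι (qFact (p ^ m) (k / p ^ m)))⁻¹ *
          (ι (qFact (p ^ m) (k' / p ^ m)))⁻¹))
      = C (Polynomial.C (eC k k' j * ((ι (qFact (p ^ m) (k / p ^ m)))⁻¹ *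
          (ι (qFact (p ^ m) (k' / p ^ m)))⁻¹)) * Polynomial.X ^ j) * F (k + k' - j) := by
        simp only [map_mul]; ring
    _ = C (Polynomial.C ((ι (qFact 1 j) * (ι (qFact (p ^ m) (j / p ^ m)))⁻¹) *
          qQ ^ (j * (j - 1) / 2) * braceC p m (k + k' - j) k * qBinomF k j *
          angleC p m k' j * (qQ - 1) ^ j *
          (ι (qFact (p ^ m) ((k + k' - j) / p ^ m)))⁻¹) * Polynomial.X ^ j) *
          F (k + k' - j) := by
        rw [scalar_eq p m k k' j hjk hjk']
    _ = C (Polynomial.C ((ι (qFact 1 j) * (ι (qFact (p ^ m) (j / p ^ m)))⁻¹) *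
          qQ ^ (j * (j - 1) / 2) * braceC p m (k + k' - j) k * qBinomF k j *
          angleC p m k' j * (qQ - 1) ^ j) * Polynomial.X ^ j) *
          (F (k + k' - j) * C (Polynomial.C (ι (qFact (p ^ m) ((k + k' - j) / p ^ m)))⁻¹)) := by
        simp only [map_mul]; ring
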